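/- Let θ_a > 0 for each arm a ∈ A with |A| = m, and suppose at time t the per-arm scores satisfy |S_a(t) − S_b(t)| ≤ 1 for all a, b in the active set A(t), and S_a(t) ≥ S_b(t) − 1 for a ∈ A(t), b ∉ A(t). Then for every a ∈ A(t), the arrival probability λ_a(t) = (S_a(t) + θ_a) / Σ_b (S_b(t) + θ_b) satisfies λ_a(t) ≥ c where c = min_{a,b ∈ A} θ_a / (m(1 + θ_b)). -/

import Mathlib

/-!
Every score is at most `S a + 1`, so the total `∑ b, (S b + θ b)` is at most `m (S a + 1 + θ*)`
with `θ* = max θ`. Since `θ a ≤ 1 + θ*`, adding `S a ≥ 0` to the numerator and denominator of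
`θ a / (1 + θ*)` can only increase it, so `λ_a ≥ θ a / (m (1 + θ*)) ≥ c`.
-/

open Finset

lemma div_le_add_div_add_left {K : Type*} [Field K] [LinearOrder K] [IsStrictOrderedRing K]
    {n d s : K} (hnd : n ≤ d) (hs : 0 ≤ s) (hd : 0 < d) :
    n / d ≤ (s + n) / (s + d) := by
  rw [div_le_div_iff₀ hd (by linarith)]
  nlinarith

lemma le_add_one_of_balanced {ι : Type*} {A : Finset ι} {S : ι → ℝ} {a : ι} (ha : a ∈ A)
    (hbal : ∀ a ∈ A, ∀ b ∈ A, |S a - S b| ≤ 1) (hout : ∀ a ∈ A, ∀ b ∉ A, S b - 1 ≤ S a)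
    (b : ι) : S b ≤ S a + 1 := by
  by_cases hb : b ∈ A
  · linarith [(abs_le.mp (hbal a ha b hb)).1]
  · linarith [hout a ha b hb]

lemma ciInf_ciInf_le_of_finite {α ι κ : Type*} [ConditionallyCompleteLattice α] [Finite ι]
    [Finite κ] (f : ι → κ → α) (i : ι) (j : κ) :
    ⨅ i, ⨅ j, f i j ≤ f i j :=
  (ciInf_le (Set.finite_range _).bddBelow i).trans (ciInf_le (Set.finite_range _).bddBelow j)

theorem stmt_3_general {ι : Type*} [Fintype ι]
    (θ : ι → ℝ) (hθ : ∀ a, 0 < θ a)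
    (Aactive : Finset ι) (S : ι → ℝ) (hS : ∀ a, 0 ≤ S a)
    (hbal : ∀ a ∈ Aactive, ∀ b ∈ Aactive, |S a - S b| ≤ 1)
    (hout : ∀ a ∈ Aactive, ∀ b ∉ Aactive, S b - 1 ≤ S a) :
    ∀ a ∈ Aactive,
      (⨅ a' : ι, ⨅ b' : ι, θ a' / ((Fintype.card ι : ℝ) * (1 + θ b')))
        ≤ (S a + θ a) / ∑ b : ι, (S b + θ b) := by
  intro a ha
  have : Nonempty ι := ⟨a⟩
  obtain ⟨b', hb'⟩ := Finite.exists_max θ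
  have hm : 0 < (Fintype.card ι : ℝ) := Nat.cast_pos.mpr Fintype.card_pos
  have hsum_le : ∑ b, (S b + θ b) ≤ (Fintype.card ι : ℝ) * (S a + 1 + θ b') := by
    simpa only [card_univ, nsmul_eq_mul] using sum_le_card_nsmul univ _ _ fun b _ =>
      add_le_add (le_add_one_of_balanced ha hbal hout b) (hb' b)
  have hsum_pos : 0 < ∑ b, (S b + θ b) :=
    sum_pos (fun b _ => add_pos_of_nonneg_of_pos (hS b) (hθ b)) ⟨a, mem_univ a⟩
  calc ⨅ a', ⨅ b'', θ a' / ((Fintype.card ι : ℝ) * (1 + θ b''))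
      ≤ θ a / ((Fintype.card ι : ℝ) * (1 + θ b')) := ciInf_ciInf_le_of_finite _ a b'
    _ = θ a / (1 + θ b') / (Fintype.card ι : ℝ) := by rw [div_div, mul_comm]
    _ ≤ (S a + θ a) / (S a + (1 + θ b')) / (Fintype.card ι : ℝ) := by
        refine div_le_div_of_nonneg_right ?_ hm.le
        exact div_le_add_div_add_left (by linarith [hb' a]) (hS a) (by linarith [hθ b'])
    _ = (S a + θ a) / ((Fintype.card ι : ℝ) * (S a + 1 + θ b')) := by
        rw [div_div, mul_comm, add_assoc]
    _ ≤ (S a + θ a) / ∑ b, (S b + θ b) :=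
        div_le_div_of_nonneg_left (by linarith [hS a, hθ a]) hsum_pos hsum_le

/-- Lemma 5 (balancedness of BE-AE, α = 1): if active arms' scores are within 1 of
each other and dominate inactive scores minus 1, then the arrival probability
`λ_a(t) = (S a + θ a) / ∑_b (S b + θ b)` of every active arm `a` is at least
`c = min_{a,b} θ a / (m (1 + θ b))`. -/
theorem stmt_3 {ι : Type*} [Fintype ι] [Nonempty ι] [DecidableEq ι]
    (θ : ι → ℝ) (hθ : ∀ a, 0 < θ a)
    (Aactive : Finset ι) (S : ι → ℝ) (hS : ∀ a, 0 ≤ S a)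
    (hbal : ∀ a ∈ Aactive, ∀ b ∈ Aactive, |S a - S b| ≤ 1)
    (hout : ∀ a ∈ Aactive, ∀ b ∉ Aactive, S b - 1 ≤ S a) :
    ∀ a ∈ Aactive,
      (⨅ a' : ι, ⨅ b' : ι, θ a' / ((Fintype.card ι : ℝ) * (1 + θ b')))
        ≤ (S a + θ a) / ∑ b : ι, (S b + θ b) :=
  stmt_3_general θ hθ Aactive S hS hbal hout
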